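/- Let n ≥ 1 and L, L' ≥ 0 be integers, set q = L' − L, and let P ∈ ℂ[w₁,…,wₙ,v₁,…,vₙ] be bihomogeneous of bidegree (L,L') and harmonic (ΔP = 0). For a real-differentiable function f : ℂⁿ → ℂ define the Wirtinger derivatives ∂_α f(w) = (1/2)(Df(w)[e_α] − i·Df(w)[i·e_α]) and ∂̄_α f(w) = (1/2)(Df(w)[e_α] + i·Df(w)[i·e_α]), where Df(w) is the real Fréchet derivative and e_α is the α-th standard basis vector. On ℂⁿ ∖ {0}, with X(w) = ‖w‖² = ∑_α w_α·conj(w_α), define the gauged derivatives D_α f = ∂_α f + (q/2)·(conj(w_α)/X)·f and D̄_α f = ∂̄_α f − (q/2)·(w_α/X)·f, and the Bochner Laplacian Ĥ_q f = −(X/2)·∑_{α=1}^n (D_α(D̄_α f) + D̄_α(D_α f)). Then the function Ψ(w) = X(w)^{−(L+L')/2} · P(w, conj(w)) satisfies Ĥ_q Ψ = [L·L' + (n−1)·(L+L')/2]·Ψ on ℂⁿ ∖ {0}. (This is the monopole-harmonic spectrum E(n,L,L') = LL' + (n−1)(L+L')/2 of the paper, for the ℂP monopole of charge q.) -/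

import Mathlib

open MvPolynomial Complex

noncomputable section

/-- Weight function giving the degree in the `w`-variables (indexed by `Sum.inl`). -/
def wWt (n : ℕ) : (Fin n ⊕ Fin n) → ℕ := Sum.elim (fun _ => 1) (fun _ => 0)

/-- Weight function giving the degree in the `v`-variables (indexed by `Sum.inr`). -/
def vWt (n : ℕ) : (Fin n ⊕ Fin n) → ℕ := Sum.elim (fun _ => 0) (fun _ => 1)

/-- The complex Laplacian `Δ = ∑_α ∂²/∂w_α∂v_α` on polynomials. -/
def polyLap (n : ℕ) (P : MvPolynomial (Fin n ⊕ Fin n) ℂ) : MvPolynomial (Fin n ⊕ Fin n) ℂ :=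
  ∑ α : Fin n, pderiv (Sum.inl α) (pderiv (Sum.inr α) P)

/-- `X(w) = ∑_α w_α·conj(w_α) = ‖w‖²` as a complex number. -/
def Xnorm (n : ℕ) (w : Fin n → ℂ) : ℂ := ∑ α : Fin n, w α * (starRingEnd ℂ) (w α)

/-- The holomorphic Wirtinger derivative `∂_α f = (1/2)(Df[e_α] − i·Df[i·e_α])`. -/
def wirt (n : ℕ) (α : Fin n) (f : (Fin n → ℂ) → ℂ) (w : Fin n → ℂ) : ℂ :=
  (1 / 2) * (fderiv ℝ f w (Pi.single α 1) - I * fderiv ℝ f w ((I • (Pi.single α 1 : Fin n → ℂ))))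

/-- The antiholomorphic Wirtinger derivative `∂̄_α f = (1/2)(Df[e_α] + i·Df[i·e_α])`. -/
def wirtBar (n : ℕ) (α : Fin n) (f : (Fin n → ℂ) → ℂ) (w : Fin n → ℂ) : ℂ :=
  (1 / 2) * (fderiv ℝ f w (Pi.single α 1) + I * fderiv ℝ f w ((I • (Pi.single α 1 : Fin n → ℂ))))

/-- Gauged derivative `D_α f = ∂_α f + (q/2)·(conj(w_α)/X)·f`. -/
def covD (n : ℕ) (q : ℤ) (α : Fin n) (f : (Fin n → ℂ) → ℂ) : (Fin n → ℂ) → ℂ :=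
  fun w => wirt n α f w + ((q : ℂ) / 2) * ((starRingEnd ℂ) (w α) / Xnorm n w) * f w

/-- Gauged derivative `D̄_α f = ∂̄_α f − (q/2)·(w_α/X)·f`. -/
def covDBar (n : ℕ) (q : ℤ) (α : Fin n) (f : (Fin n → ℂ) → ℂ) : (Fin n → ℂ) → ℂ :=
  fun w => wirtBar n α f w - ((q : ℂ) / 2) * (w α / Xnorm n w) * f w

/-- The Bochner Laplacian `Ĥ_q f = −(X/2)·∑_α (D_α D̄_α + D̄_α D_α) f`. -/
def bochner (n : ℕ) (q : ℤ) (f : (Fin n → ℂ) → ℂ) (w : Fin n → ℂ) : ℂ :=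
  -(Xnorm n w / 2) *
    ∑ α : Fin n, (covD n q α (covDBar n q α f) w + covDBar n q α (covD n q α f) w)

/-- The monopole harmonic `Ψ(w) = X(w)^{−(L+L')/2} · P(w, conj w)`. -/
def monoPsi (n L L' : ℕ) (P : MvPolynomial (Fin n ⊕ Fin n) ℂ) (w : Fin n → ℂ) : ℂ :=
  (Xnorm n w) ^ (-(((L + L' : ℕ) : ℂ)) / 2) *
    MvPolynomial.eval (Sum.elim w (fun α => (starRingEnd ℂ) (w α))) P

/-!
Write `Ψ = X^c · P(w, w̄)` with `c = -(L+L')/2`. Because `∂_α X = w̄_α` and `∂̄_α X = w_α`, a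
gauged derivative maps `X^c · Q(w, w̄)` to `X^(c-1) · Q'(w, w̄)` with the polynomial
`Q' = a · v_α · Q + (∑ w_β v_β) · ∂Q/∂w_α` (for `D̄_α`: `w` and `v` swapped), the gauge term only
shifting the constant `a`. Hence `Ĥ_q Ψ = -(1/2) X^(c-1) · R(w, w̄)` for a polynomial `R` that is
second order in `P`, and Euler's identity in each group of variables together with `ΔP = 0`
reduce `R` to a constant multiple of `(∑ w_β v_β) · P`. So `Ψ` is an eigenfunction for every
exponent `c`; at `c = -(L+L')/2`, `q = L' - L` the eigenvalue is `LL' + (n-1)(L+L')/2`.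
-/

namespace MvPolynomial

theorem pderiv_pderiv_comm {R σ : Type*} [CommSemiring R] (i j : σ) (p : MvPolynomial σ R) :
    pderiv i (pderiv j p) = pderiv j (pderiv i p) := by
  classical
  induction p using MvPolynomial.induction_on' with
  | add p q hp hq => simp [hp, hq]
  | monomial u a =>
      simp only [pderiv_monomial]
      rcases eq_or_ne i j with rfl | hij
      · rfl
      · congr 1
        · rw [tsub_tsub, tsub_tsub, add_comm]
        · simp only [Finsupp.tsub_apply, Finsupp.single_eq_of_ne hij,
            Finsupp.single_eq_of_ne (Ne.symm hij), Nat.sub_zero]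
          ring

end MvPolynomial

section Polynomial

variable {n : ℕ}

def normSqPoly (n : ℕ) : MvPolynomial (Fin n ⊕ Fin n) ℂ :=
  ∑ α : Fin n, X (Sum.inl α) * X (Sum.inr α)

lemma pderiv_inl_normSqPoly (α : Fin n) :
    pderiv (Sum.inl α) (normSqPoly n) = X (Sum.inr α) := by
  classical
  simp [normSqPoly, Pi.single_apply]

lemma pderiv_inr_normSqPoly (α : Fin n) :
    pderiv (Sum.inr α) (normSqPoly n) = X (Sum.inl α) := by
  classical
  simp [normSqPoly, Pi.single_apply]

/-- The gauged derivatives act on `X^c · Q(w, w̄)` through this operator on `Q`, lowering `c`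
by one. -/
def gaugedPderiv (n : ℕ) (a : ℂ) (i j : Fin n ⊕ Fin n) (Q : MvPolynomial (Fin n ⊕ Fin n) ℂ) :
    MvPolynomial (Fin n ⊕ Fin n) ℂ :=
  C a * (X j * Q) + normSqPoly n * pderiv i Q

lemma gaugedPderiv_gaugedPderiv {a a' : ℂ} {i j : Fin n ⊕ Fin n}
    (hi : pderiv i (normSqPoly n) = X j) (Q : MvPolynomial (Fin n ⊕ Fin n) ℂ) :
    gaugedPderiv n a' i j (gaugedPderiv n a j i Q)
      = C (a' * a) * (X i * X j) * Q + C a' * normSqPoly n * (X j * pderiv j Q)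
        + normSqPoly n * (C a * Q + C a * (X i * pderiv i Q) + X j * pderiv j Q
          + normSqPoly n * pderiv i (pderiv j Q)) := by
  simp only [gaugedPderiv, map_add, map_mul, pderiv_mul, pderiv_C, hi, pderiv_X_self, zero_mul,
    zero_add]
  ring

lemma sum_gaugedPderiv_gaugedPderiv {a a' l l' : ℂ} (i j : Fin n → Fin n ⊕ Fin n)
    (hij : ∀ α, pderiv (i α) (normSqPoly n) = X (j α))
    (hXp : ∑ α, X (i α) * X (j α) = normSqPoly n) {P : MvPolynomial (Fin n ⊕ Fin n) ℂ}
    (hi : ∑ α, X (i α) * pderiv (i α) P = C l * P)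
    (hj : ∑ α, X (j α) * pderiv (j α) P = C l' * P)
    (hlap : ∑ α, pderiv (i α) (pderiv (j α) P) = 0) :
    ∑ α, gaugedPderiv n a' (i α) (j α) (gaugedPderiv n a (j α) (i α) P)
      = C (a' * a + a' * l' + n * a + a * l + l') * (normSqPoly n * P) := by
  simp only [gaugedPderiv_gaugedPderiv (hij _), Finset.sum_add_distrib, ← Finset.mul_sum,
    ← Finset.sum_mul, Finset.sum_const, Finset.card_univ, Fintype.card_fin, hXp, hi, hj, hlap,
    nsmul_eq_mul]
  simp only [map_add, map_mul, map_natCast]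
  ring

lemma sum_X_inl_mul_pderiv {L : ℕ} {P : MvPolynomial (Fin n ⊕ Fin n) ℂ}
    (hL : P.IsWeightedHomogeneous (wWt n) L) :
    ∑ α : Fin n, X (Sum.inl α) * pderiv (Sum.inl α) P = C (L : ℂ) * P := by
  have h := hL.sum_weight_X_mul_pderiv
  simp only [Fintype.sum_sum_type, wWt, Sum.elim_inl, Sum.elim_inr, one_smul, zero_smul,
    Finset.sum_const_zero, add_zero] at h
  rw [h, nsmul_eq_mul, map_natCast]

lemma sum_X_inr_mul_pderiv {L' : ℕ} {P : MvPolynomial (Fin n ⊕ Fin n) ℂ}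
    (hL' : P.IsWeightedHomogeneous (vWt n) L') :
    ∑ α : Fin n, X (Sum.inr α) * pderiv (Sum.inr α) P = C (L' : ℂ) * P := by
  have h := hL'.sum_weight_X_mul_pderiv
  simp only [Fintype.sum_sum_type, vWt, Sum.elim_inl, Sum.elim_inr, one_smul, zero_smul,
    Finset.sum_const_zero, zero_add] at h
  rw [h, nsmul_eq_mul, map_natCast]

end Polynomial

section Wirtinger

variable {n : ℕ} {f g : (Fin n → ℂ) → ℂ} {w : Fin n → ℂ} {β : Fin n}

lemma wirt_add (hf : DifferentiableAt ℝ f w) (hg : DifferentiableAt ℝ g w) :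
    wirt n β (fun x => f x + g x) w = wirt n β f w + wirt n β g w := by
  simp only [wirt, fderiv_fun_add hf hg, add_apply]
  ring

lemma wirtBar_add (hf : DifferentiableAt ℝ f w) (hg : DifferentiableAt ℝ g w) :
    wirtBar n β (fun x => f x + g x) w = wirtBar n β f w + wirtBar n β g w := by
  simp only [wirtBar, fderiv_fun_add hf hg, add_apply]
  ring

lemma wirt_mul (hf : DifferentiableAt ℝ f w) (hg : DifferentiableAt ℝ g w) :
    wirt n β (fun x => f x * g x) w = wirt n β f w * g w + f w * wirt n β g w := by
  simp only [wirt, fderiv_fun_mul hf hg, add_apply, smul_apply, smul_eq_mul]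
  ring

lemma wirtBar_mul (hf : DifferentiableAt ℝ f w) (hg : DifferentiableAt ℝ g w) :
    wirtBar n β (fun x => f x * g x) w = wirtBar n β f w * g w + f w * wirtBar n β g w := by
  simp only [wirtBar, fderiv_fun_mul hf hg, add_apply, smul_apply, smul_eq_mul]
  ring

lemma wirt_const (a : ℂ) : wirt n β (fun _ => a) w = 0 := by
  simp [wirt]

lemma wirtBar_const (a : ℂ) : wirtBar n β (fun _ => a) w = 0 := by
  simp [wirtBar]

lemma wirt_comp {d : ℂ} {h : ℂ → ℂ} (hf : DifferentiableAt ℝ f w) (hh : HasDerivAt h d (f w)) :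
    wirt n β (fun x => h (f x)) w = d * wirt n β f w := by
  have hcomp : HasFDerivAt (fun x => h (f x)) (d • fderiv ℝ f w) w :=
    hh.comp_hasFDerivAt w hf.hasFDerivAt
  simp only [wirt, hcomp.fderiv, smul_apply, smul_eq_mul]
  ring

lemma wirtBar_comp {d : ℂ} {h : ℂ → ℂ} (hf : DifferentiableAt ℝ f w)
    (hh : HasDerivAt h d (f w)) :
    wirtBar n β (fun x => h (f x)) w = d * wirtBar n β f w := by
  have hcomp : HasFDerivAt (fun x => h (f x)) (d • fderiv ℝ f w) w :=
    hh.comp_hasFDerivAt w hf.hasFDerivAt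
  simp only [wirtBar, hcomp.fderiv, smul_apply, smul_eq_mul]
  ring

lemma wirt_congr (h : f =ᶠ[nhds w] g) : wirt n β f w = wirt n β g w := by
  rw [wirt, wirt, h.fderiv_eq]

lemma wirtBar_congr (h : f =ᶠ[nhds w] g) : wirtBar n β f w = wirtBar n β g w := by
  rw [wirtBar, wirtBar, h.fderiv_eq]

lemma covD_congr {q : ℤ} {α : Fin n} (h : f =ᶠ[nhds w] g) :
    covD n q α f w = covD n q α g w := by
  rw [covD, covD, wirt_congr h, h.eq_of_nhds]

lemma covDBar_congr {q : ℤ} {α : Fin n} (h : f =ᶠ[nhds w] g) :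
    covDBar n q α f w = covDBar n q α g w := by
  rw [covDBar, covDBar, wirtBar_congr h, h.eq_of_nhds]

end Wirtinger

section EvalConj

variable {n : ℕ} {w : Fin n → ℂ} {β : Fin n}

def evalConj (n : ℕ) (Q : MvPolynomial (Fin n ⊕ Fin n) ℂ) (w : Fin n → ℂ) : ℂ :=
  eval (Sum.elim w fun α => (starRingEnd ℂ) (w α)) Q

lemma differentiableAt_evalConj (Q : MvPolynomial (Fin n ⊕ Fin n) ℂ) :
    DifferentiableAt ℝ (evalConj n Q) w := by
  have hcoord : ∀ i, AnalyticAt ℝ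
      (fun x : Fin n → ℂ => Sum.elim x (fun α => (starRingEnd ℂ) (x α)) i) w := by
    rintro (α | α)
    · exact (ContinuousLinearMap.proj (R := ℝ) (φ := fun _ : Fin n => ℂ) α).analyticAt w
    · exact (conjCLE.toContinuousLinearMap.comp
        (ContinuousLinearMap.proj (R := ℝ) (φ := fun _ : Fin n => ℂ) α)).analyticAt w
  exact (AnalyticAt.aeval_mvPolynomial hcoord Q).differentiableAt


lemma evalConj_X_inl (α : Fin n) : evalConj n (X (Sum.inl α)) = fun x => x α := by
  funext x; simp [evalConj]

lemma evalConj_X_inr (α : Fin n) :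
    evalConj n (X (Sum.inr α)) = fun x => (starRingEnd ℂ) (x α) := by
  funext x; simp [evalConj]

lemma fderiv_evalConj_X_inl (α : Fin n) :
    fderiv ℝ (evalConj n (X (Sum.inl α))) w = ContinuousLinearMap.proj α := by
  rw [evalConj_X_inl]
  exact (ContinuousLinearMap.proj (R := ℝ) (φ := fun _ : Fin n => ℂ) α).hasFDerivAt.fderiv

lemma fderiv_evalConj_X_inr (α : Fin n) :
    fderiv ℝ (evalConj n (X (Sum.inr α))) w =
      conjCLE.toContinuousLinearMap.comp (ContinuousLinearMap.proj α) := by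
  rw [evalConj_X_inr]
  exact (conjCLE.toContinuousLinearMap.comp
    (ContinuousLinearMap.proj (R := ℝ) (φ := fun _ : Fin n => ℂ) α)).hasFDerivAt.fderiv

lemma wirt_evalConj_X (i : Fin n ⊕ Fin n) :
    wirt n β (evalConj n (X i)) w = evalConj n (pderiv (Sum.inl β) (X i)) w := by
  rcases i with α | α <;>
    simp only [wirt, fderiv_evalConj_X_inl, fderiv_evalConj_X_inr] <;>
    rcases eq_or_ne β α with rfl | h <;>
    simp [evalConj, pderiv_X, one_add_one_eq_two, *]

lemma wirtBar_evalConj_X (i : Fin n ⊕ Fin n) :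
    wirtBar n β (evalConj n (X i)) w = evalConj n (pderiv (Sum.inr β) (X i)) w := by
  rcases i with α | α <;>
    simp only [wirtBar, fderiv_evalConj_X_inl, fderiv_evalConj_X_inr] <;>
    rcases eq_or_ne β α with rfl | h <;>
    simp [evalConj, pderiv_X, one_add_one_eq_two, *]

lemma evalConj_C (a : ℂ) : evalConj n (C a) = fun _ => a := by
  funext x; simp [evalConj]

lemma evalConj_mul (p r : MvPolynomial (Fin n ⊕ Fin n) ℂ) :
    evalConj n (p * r) = fun x => evalConj n p x * evalConj n r x := by
  funext x; simp [evalConj]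

lemma evalConj_add (p r : MvPolynomial (Fin n ⊕ Fin n) ℂ) :
    evalConj n (p + r) = fun x => evalConj n p x + evalConj n r x := by
  funext x; simp [evalConj]

lemma wirt_evalConj (Q : MvPolynomial (Fin n ⊕ Fin n) ℂ) :
    wirt n β (evalConj n Q) w = evalConj n (pderiv (Sum.inl β) Q) w := by
  induction Q using MvPolynomial.induction_on with
  | C a => rw [evalConj_C, wirt_const, pderiv_C, evalConj, map_zero]
  | add p r hp hr =>
      rw [evalConj_add, wirt_add (differentiableAt_evalConj p) (differentiableAt_evalConj r),
        hp, hr, map_add, evalConj_add]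
  | mul_X p i hp =>
      rw [evalConj_mul, wirt_mul (differentiableAt_evalConj p) (differentiableAt_evalConj _),
        hp, wirt_evalConj_X, pderiv_mul, evalConj_add, evalConj_mul, evalConj_mul]

lemma wirtBar_evalConj (Q : MvPolynomial (Fin n ⊕ Fin n) ℂ) :
    wirtBar n β (evalConj n Q) w = evalConj n (pderiv (Sum.inr β) Q) w := by
  induction Q using MvPolynomial.induction_on with
  | C a => rw [evalConj_C, wirtBar_const, pderiv_C, evalConj, map_zero]
  | add p r hp hr =>
      rw [evalConj_add, wirtBar_add (differentiableAt_evalConj p) (differentiableAt_evalConj r),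
        hp, hr, map_add, evalConj_add]
  | mul_X p i hp =>
      rw [evalConj_mul, wirtBar_mul (differentiableAt_evalConj p) (differentiableAt_evalConj _),
        hp, wirtBar_evalConj_X, pderiv_mul, evalConj_add, evalConj_mul, evalConj_mul]

end EvalConj

section Xnorm

variable {n : ℕ} {w : Fin n → ℂ} {β : Fin n}

lemma Xnorm_eq_evalConj : Xnorm n = evalConj n (normSqPoly n) := by
  funext x; simp [Xnorm, evalConj, normSqPoly]

lemma differentiableAt_Xnorm : DifferentiableAt ℝ (Xnorm n) w :=
  Xnorm_eq_evalConj ▸ differentiableAt_evalConj _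

lemma wirt_Xnorm : wirt n β (Xnorm n) w = (starRingEnd ℂ) (w β) := by
  rw [Xnorm_eq_evalConj, wirt_evalConj, pderiv_inl_normSqPoly, evalConj_X_inr]

lemma wirtBar_Xnorm : wirtBar n β (Xnorm n) w = w β := by
  rw [Xnorm_eq_evalConj, wirtBar_evalConj, pderiv_inr_normSqPoly, evalConj_X_inl]

lemma Xnorm_eq_ofReal_sum_normSq (w : Fin n → ℂ) :
    Xnorm n w = ((∑ α, normSq (w α) : ℝ) : ℂ) := by
  simp [Xnorm, mul_conj]

lemma Xnorm_mem_slitPlane (hw : w ≠ 0) : Xnorm n w ∈ slitPlane := by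
  obtain ⟨α, hα⟩ := Function.ne_iff.mp hw
  rw [Xnorm_eq_ofReal_sum_normSq, ofReal_mem_slitPlane]
  exact Finset.sum_pos' (fun i _ => normSq_nonneg _)
    ⟨α, Finset.mem_univ α, normSq_pos.2 hα⟩

lemma Xnorm_ne_zero (hw : w ≠ 0) : Xnorm n w ≠ 0 :=
  slitPlane_ne_zero (Xnorm_mem_slitPlane hw)

lemma Xnorm_cpow_sub_one_mul (c : ℂ) (hw : w ≠ 0) :
    Xnorm n w ^ (c - 1) * Xnorm n w = Xnorm n w ^ c := by
  rw [cpow_sub _ _ (Xnorm_ne_zero hw), cpow_one, div_mul_cancel₀ _ (Xnorm_ne_zero hw)]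

lemma hasDerivAt_cpow_Xnorm (c : ℂ) (hw : w ≠ 0) :
    HasDerivAt (fun z : ℂ => z ^ c) (c * Xnorm n w ^ (c - 1)) (Xnorm n w) :=
  (hasStrictDerivAt_cpow_const (Xnorm_mem_slitPlane hw)).hasDerivAt

lemma differentiableAt_Xnorm_cpow (c : ℂ) (hw : w ≠ 0) :
    DifferentiableAt ℝ (fun x => Xnorm n x ^ c) w :=
  ((hasDerivAt_cpow_Xnorm c hw).comp_hasFDerivAt w
    differentiableAt_Xnorm.hasFDerivAt).differentiableAt

end Xnorm

section Gauged

variable {n : ℕ} {w : Fin n → ℂ}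

def cpowXnormMul (n : ℕ) (c : ℂ) (Q : MvPolynomial (Fin n ⊕ Fin n) ℂ) (w : Fin n → ℂ) : ℂ :=
  Xnorm n w ^ c * evalConj n Q w

lemma evalConj_gaugedPderiv (a : ℂ) (i j : Fin n ⊕ Fin n)
    (Q : MvPolynomial (Fin n ⊕ Fin n) ℂ) :
    evalConj n (gaugedPderiv n a i j Q) w
      = a * (evalConj n (X j) w * evalConj n Q w) + Xnorm n w * evalConj n (pderiv i Q) w := by
  simp [gaugedPderiv, evalConj, Xnorm_eq_evalConj]

lemma covD_cpowXnormMul (q : ℤ) (c : ℂ) (Q : MvPolynomial (Fin n ⊕ Fin n) ℂ) (α : Fin n)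
    (hw : w ≠ 0) :
    covD n q α (cpowXnormMul n c Q) w
      = cpowXnormMul n (c - 1) (gaugedPderiv n (c + q / 2) (Sum.inl α) (Sum.inr α) Q) w := by
  have hwirt := wirt_mul (β := α) (differentiableAt_Xnorm_cpow c hw)
    (differentiableAt_evalConj Q)
  rw [wirt_comp differentiableAt_Xnorm (hasDerivAt_cpow_Xnorm c hw), wirt_Xnorm,
    wirt_evalConj] at hwirt
  have hX0 := Xnorm_ne_zero hw
  rw [covD, show cpowXnormMul n c Q = fun x => Xnorm n x ^ c * evalConj n Q x from rfl, hwirt]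
  simp only [cpowXnormMul, evalConj_gaugedPderiv, evalConj_X_inr]
  rw [← Xnorm_cpow_sub_one_mul c hw]
  field_simp
  ring

lemma covDBar_cpowXnormMul (q : ℤ) (c : ℂ) (Q : MvPolynomial (Fin n ⊕ Fin n) ℂ) (α : Fin n)
    (hw : w ≠ 0) :
    covDBar n q α (cpowXnormMul n c Q) w
      = cpowXnormMul n (c - 1) (gaugedPderiv n (c - q / 2) (Sum.inr α) (Sum.inl α) Q) w := by
  have hwirt := wirtBar_mul (β := α) (differentiableAt_Xnorm_cpow c hw)
    (differentiableAt_evalConj Q)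
  rw [wirtBar_comp differentiableAt_Xnorm (hasDerivAt_cpow_Xnorm c hw), wirtBar_Xnorm,
    wirtBar_evalConj] at hwirt
  have hX0 := Xnorm_ne_zero hw
  rw [covDBar, show cpowXnormMul n c Q = fun x => Xnorm n x ^ c * evalConj n Q x from rfl, hwirt]
  simp only [cpowXnormMul, evalConj_gaugedPderiv, evalConj_X_inl]
  rw [← Xnorm_cpow_sub_one_mul c hw]
  field_simp
  ring

lemma covD_cpowXnormMul_eventuallyEq (q : ℤ) (c : ℂ) (Q : MvPolynomial (Fin n ⊕ Fin n) ℂ)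
    (α : Fin n) (hw : w ≠ 0) :
    covD n q α (cpowXnormMul n c Q) =ᶠ[nhds w]
      cpowXnormMul n (c - 1) (gaugedPderiv n (c + q / 2) (Sum.inl α) (Sum.inr α) Q) :=
  eventually_ne_nhds hw |>.mono fun _ hx => covD_cpowXnormMul q c Q α hx

lemma covDBar_cpowXnormMul_eventuallyEq (q : ℤ) (c : ℂ) (Q : MvPolynomial (Fin n ⊕ Fin n) ℂ)
    (α : Fin n) (hw : w ≠ 0) :
    covDBar n q α (cpowXnormMul n c Q) =ᶠ[nhds w]
      cpowXnormMul n (c - 1) (gaugedPderiv n (c - q / 2) (Sum.inr α) (Sum.inl α) Q) :=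
  eventually_ne_nhds hw |>.mono fun _ hx => covDBar_cpowXnormMul q c Q α hx

lemma covD_covDBar_cpowXnormMul (q : ℤ) (c : ℂ) (Q : MvPolynomial (Fin n ⊕ Fin n) ℂ)
    (α : Fin n) (hw : w ≠ 0) :
    covD n q α (covDBar n q α (cpowXnormMul n c Q)) w
      = cpowXnormMul n (c - 2) (gaugedPderiv n (c - 1 + q / 2) (Sum.inl α) (Sum.inr α)
          (gaugedPderiv n (c - q / 2) (Sum.inr α) (Sum.inl α) Q)) w := by
  rw [covD_congr (covDBar_cpowXnormMul_eventuallyEq q c Q α hw), covD_cpowXnormMul _ _ _ _ hw,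
    sub_sub, one_add_one_eq_two]

lemma covDBar_covD_cpowXnormMul (q : ℤ) (c : ℂ) (Q : MvPolynomial (Fin n ⊕ Fin n) ℂ)
    (α : Fin n) (hw : w ≠ 0) :
    covDBar n q α (covD n q α (cpowXnormMul n c Q)) w
      = cpowXnormMul n (c - 2) (gaugedPderiv n (c - 1 - q / 2) (Sum.inr α) (Sum.inl α)
          (gaugedPderiv n (c + q / 2) (Sum.inl α) (Sum.inr α) Q)) w := by
  rw [covDBar_congr (covD_cpowXnormMul_eventuallyEq q c Q α hw),
    covDBar_cpowXnormMul _ _ _ _ hw, sub_sub c 1 1, one_add_one_eq_two]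

end Gauged

lemma bochner_cpowXnormMul {n L L' : ℕ} {P : MvPolynomial (Fin n ⊕ Fin n) ℂ}
    (hL : P.IsWeightedHomogeneous (wWt n) L) (hL' : P.IsWeightedHomogeneous (vWt n) L')
    (hharm : polyLap n P = 0) (q : ℤ) (c : ℂ) {w : Fin n → ℂ} (hw : w ≠ 0) :
    bochner n q (cpowXnormMul n c P) w
      = -(c ^ 2 - (q / 2) ^ 2 + (n - 1) * c + (c + q / 2) * L' + (c - q / 2) * L)
          * cpowXnormMul n c P w := by
  have hlap' : ∑ α : Fin n, pderiv (Sum.inr α) (pderiv (Sum.inl α) P) = 0 := by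
    simpa only [polyLap, pderiv_pderiv_comm (Sum.inr _)] using hharm
  have hsum := congrArg₂ (· + ·)
    (sum_gaugedPderiv_gaugedPderiv (a := c - q / 2) (a' := c - 1 + q / 2) Sum.inl Sum.inr
      pderiv_inl_normSqPoly rfl (sum_X_inl_mul_pderiv hL) (sum_X_inr_mul_pderiv hL') hharm)
    (sum_gaugedPderiv_gaugedPderiv (a := c + q / 2) (a' := c - 1 - q / 2) Sum.inr Sum.inl
      pderiv_inr_normSqPoly (by simp only [normSqPoly, mul_comm]) (sum_X_inr_mul_pderiv hL')
      (sum_X_inl_mul_pderiv hL) hlap')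
  have hpow : Xnorm n w ^ c = Xnorm n w ^ (c - 2) * Xnorm n w * Xnorm n w := by
    rw [← Xnorm_cpow_sub_one_mul c hw, ← Xnorm_cpow_sub_one_mul (c - 1) hw, sub_sub,
      one_add_one_eq_two]
  simp only [bochner, covD_covDBar_cpowXnormMul _ _ _ _ hw, covDBar_covD_cpowXnormMul _ _ _ _ hw]
  rw [Finset.sum_add_distrib]
  simp only [cpowXnormMul, ← Finset.mul_sum, ← mul_add, evalConj, ← map_sum, ← map_add, hsum]
  have hXe : eval (Sum.elim w fun α => (starRingEnd ℂ) (w α)) (normSqPoly n) = Xnorm n w := by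
    rw [Xnorm_eq_evalConj, evalConj]
  simp only [map_add, map_mul, eval_C, hXe, hpow]
  ring

theorem stmt3_general (n L L' : ℕ) (q : ℤ) (hq : q = (L' : ℤ) - L)
    (P : MvPolynomial (Fin n ⊕ Fin n) ℂ)
    (hw : P.IsWeightedHomogeneous (wWt n) L)
    (hv : P.IsWeightedHomogeneous (vWt n) L')
    (hharm : polyLap n P = 0) :
    ∀ w : Fin n → ℂ, w ≠ 0 →
      bochner n q (monoPsi n L L' P) w
        = ((L : ℂ) * (L' : ℂ) + ((n : ℂ) - 1) * ((L : ℂ) + (L' : ℂ)) / 2) *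
            monoPsi n L L' P w := by
  intro w hw0
  have hPsi : monoPsi n L L' P = cpowXnormMul n (-((L + L' : ℕ) : ℂ) / 2) P := rfl
  rw [hPsi, bochner_cpowXnormMul hw hv hharm q _ hw0, hq]
  push_cast
  ring

/-- For `P` bihomogeneous of bidegree `(L,L')` and harmonic, the monopole harmonic
`Ψ = X^{−(L+L')/2}·P(w, conj w)` is an eigenfunction of the Bochner Laplacian of
charge `q = L' − L` with eigenvalue `L·L' + (n−1)(L+L')/2`. -/
theorem stmt3 (n L L' : ℕ) (hn : 1 ≤ n) (q : ℤ) (hq : q = (L' : ℤ) - L)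
    (P : MvPolynomial (Fin n ⊕ Fin n) ℂ)
    (hw : P.IsWeightedHomogeneous (wWt n) L)
    (hv : P.IsWeightedHomogeneous (vWt n) L')
    (hharm : polyLap n P = 0) :
    ∀ w : Fin n → ℂ, w ≠ 0 →
      bochner n q (monoPsi n L L' P) w
        = ((L : ℂ) * (L' : ℂ) + ((n : ℂ) - 1) * ((L : ℂ) + (L' : ℂ)) / 2) *
            monoPsi n L L' P w :=
  stmt3_general n L L' q hq P hw hv hharm
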